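/- arXiv:1210.3730 — 3 statements merged into one kernel-verified Lean document; each statement's English description precedes it below -/
import Mathlib

section
/- The formula ψ³(h) is consistent with ψ³(c): in the ring ℤ[c, c⁻¹][α], substituting h = c² + 1, the identity (ψ³(c))² + 1 = ψ³(h) holds, where ψ³(c) = c³ + (α³ − 6α − 12)c − 4(α+1)²(α−3)c⁻¹ and ψ³(h) = h³ + (α³ − 6α − 27)h² + 3(−6α³ + α² + 36α + 67)h + 57α³ − 27α² − 334α − 342, modulo the relation w(α) = α⁴ − 6α² + (c² − 8)α − 3 = 0. -/
open Polynomial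

/-!
Clearing the denominator, `c * ψ³(c)` is a polynomial in `c` and `α`, and the identity becomes
`(c ψ³(c))² + c² = c² ψ³(c² + 1)` in `ℤ[c, α]` modulo the quartic relation satisfied by `α`;
this is an explicit polynomial multiple of that relation. Since `c` is a unit, the factor `c²`
cancels.
-/

section Psi3

variable {R : Type*} [CommRing R]

def psi3C (α c c' : R) : R :=
  c ^ 3 + (α ^ 3 - 6 * α - 12) * c - 4 * (α + 1) ^ 2 * (α - 3) * c'

def psi3H (α h : R) : R :=
  h ^ 3 + (α ^ 3 - 6 * α - 27) * h ^ 2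
    + 3 * (-6 * α ^ 3 + α ^ 2 + 36 * α + 67) * h
    + 57 * α ^ 3 - 27 * α ^ 2 - 334 * α - 342

variable {α c c' : R}

theorem mul_psi3C (hc : c * c' = 1) :
    c * psi3C α c c' = c ^ 4 + (α ^ 3 - 6 * α - 12) * c ^ 2 - 4 * (α + 1) ^ 2 * (α - 3) := by
  unfold psi3C
  linear_combination (-4 * (α + 1) ^ 2 * (α - 3)) * hc

theorem psi3C_cleared_sq_add (hα : α ^ 4 - 6 * α ^ 2 + (c ^ 2 - 8) * α - 3 = 0) :
    (c ^ 4 + (α ^ 3 - 6 * α - 12) * c ^ 2 - 4 * (α + 1) ^ 2 * (α - 3)) ^ 2 + c ^ 2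
      = c ^ 2 * psi3H α (c ^ 2 + 1) := by
  unfold psi3H
  linear_combination
    ((c ^ 2 - 4) ^ 2 * α ^ 2 + 8 * (c ^ 2 - 4) * α + (-6 * c ^ 4 + 40 * c ^ 2 - 48)) * hα

theorem psi3C_sq_add_one (hc : c * c' = 1)
    (hα : α ^ 4 - 6 * α ^ 2 + (c ^ 2 - 8) * α - 3 = 0) :
    psi3C α c c' ^ 2 + 1 = psi3H α (c ^ 2 + 1) := by
  apply ((IsUnit.of_mul_eq_one c' hc).pow 2).mul_left_cancel
  rw [mul_add, mul_one, ← mul_pow, mul_psi3C hc]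
  exact psi3C_cleared_sq_add hα

end Psi3

/-- In A = ℤ[c,c⁻¹][α]/(α⁴ − 6α² + (c²−8)α − 3), with h = c² + 1,
P = ψ³(c) and Q = ψ³(h) satisfy P² + 1 = Q. -/
theorem stmt_6 :
    let c : LaurentPolynomial ℤ := LaurentPolynomial.T 1
    let w : Polynomial (LaurentPolynomial ℤ) :=
      X ^ 4 - 6 * X ^ 2 + C (c ^ 2 - 8) * X - 3
    let α : AdjoinRoot w := AdjoinRoot.root w
    let cc : AdjoinRoot w := AdjoinRoot.of w c
    let ci : AdjoinRoot w := AdjoinRoot.of w (LaurentPolynomial.T (-1))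
    let h : AdjoinRoot w := cc ^ 2 + 1
    let P : AdjoinRoot w :=
      cc ^ 3 + (α ^ 3 - 6 * α - 12) * cc - 4 * (α + 1) ^ 2 * (α - 3) * ci
    let Q : AdjoinRoot w :=
      h ^ 3 + (α ^ 3 - 6 * α - 27) * h ^ 2
        + 3 * (-6 * α ^ 3 + α ^ 2 + 36 * α + 67) * h
        + 57 * α ^ 3 - 27 * α ^ 2 - 334 * α - 342
    P ^ 2 + 1 = Q := by
  intro c w α cc ci h P Q
  have hα : α ^ 4 - 6 * α ^ 2 + (cc ^ 2 - 8) * α - 3 = 0 := by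
    have hw := AdjoinRoot.mk_self (f := w)
    simp only [w, map_sub, map_add, map_mul, map_pow, AdjoinRoot.mk_X, AdjoinRoot.mk_C,
      map_ofNat] at hw
    exact hw
  have hc : cc * ci = 1 := by
    rw [← map_mul, ← LaurentPolynomial.T_add, add_neg_cancel, LaurentPolynomial.T_zero, map_one]
  exact psi3C_sq_add_one hc hα
end

section
/- The quartic f(u)-factorization identity: in the ring ℤ[1/4][a, b, (ab)⁻¹][u], with v + v̄ = (bu² − au − 1)/(ab) and v·v̄ = −u³/(ab), the product ψ̃₃(u,v)·ψ̃₃(u,v̄) (expanded symmetrically in v, v̄ via elementary symmetric polynomials) equals −u⁴·f(u)/(a²b), where ψ̃₃(u,v) = 3u⁴ + (a²+4b)u³v + 3a²bu²v² + 3a²b²uv³ + a²b³v⁴ and f(u) = b⁴u⁸ + 3ab³u⁷ + 3a²b²u⁶ + (a³b + 7ab²)u⁵ + (6a²b − 6b²)u⁴ + 9abu³ + (−a²+8b)u² − 3au − 3. -/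
/-!
Clearing the denominator with `V = ab·v`, `W = ab·w` turns the hypotheses into
`V + W = bu² − au − 1` and `VW = −abu³`, and `(ab)⁴ ψ̃₃(u,v)` into a quartic in `V` with
polynomial coefficients. The product of a quartic's values at `V` and `W` is a polynomial in
`V + W` and `VW`, so the claim becomes an identity in `ℤ[a,b,u]` which `ring` checks.
-/

section

variable {R : Type*} [CommRing R]

theorem quartic_mul_quartic_eq_of_add_of_mul {c₀ c₁ c₂ c₃ c₄ v w s p : R}
    (hs : v + w = s) (hp : v * w = p) :
    (c₀ + c₁ * v + c₂ * v ^ 2 + c₃ * v ^ 3 + c₄ * v ^ 4)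
        * (c₀ + c₁ * w + c₂ * w ^ 2 + c₃ * w ^ 3 + c₄ * w ^ 4)
      = c₀ ^ 2 + c₁ ^ 2 * p + c₂ ^ 2 * p ^ 2 + c₃ ^ 2 * p ^ 3 + c₄ ^ 2 * p ^ 4
        + (c₀ * c₁ + c₁ * c₂ * p + c₂ * c₃ * p ^ 2 + c₃ * c₄ * p ^ 3) * s
        + (c₀ * c₂ + c₁ * c₃ * p + c₂ * c₄ * p ^ 2) * (s ^ 2 - 2 * p)
        + (c₀ * c₃ + c₁ * c₄ * p) * (s ^ 3 - 3 * s * p)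
        + c₀ * c₄ * (s ^ 4 - 4 * s ^ 2 * p + 2 * p ^ 2) := by
  subst hs hp
  ring

def psiTilde3 (a b u v : R) : R :=
  3 * u ^ 4 + (a ^ 2 + 4 * b) * u ^ 3 * v + 3 * a ^ 2 * b * u ^ 2 * v ^ 2
    + 3 * a ^ 2 * b ^ 2 * u * v ^ 3 + a ^ 2 * b ^ 3 * v ^ 4

def psiTilde3Cleared (a b u V : R) : R :=
  3 * (a * b) ^ 4 * u ^ 4 + (a ^ 2 + 4 * b) * (a * b) ^ 3 * u ^ 3 * V
    + 3 * a ^ 2 * b * (a * b) ^ 2 * u ^ 2 * V ^ 2 + 3 * a ^ 2 * b ^ 2 * (a * b) * u * V ^ 3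
    + a ^ 2 * b ^ 3 * V ^ 4

def fPoly (a b u : R) : R :=
  b ^ 4 * u ^ 8 + 3 * a * b ^ 3 * u ^ 7 + 3 * a ^ 2 * b ^ 2 * u ^ 6
    + (a ^ 3 * b + 7 * a * b ^ 2) * u ^ 5 + (6 * a ^ 2 * b - 6 * b ^ 2) * u ^ 4
    + 9 * a * b * u ^ 3 + (-a ^ 2 + 8 * b) * u ^ 2 - 3 * a * u - 3

theorem pow_four_mul_psiTilde3 (a b u v : R) :
    (a * b) ^ 4 * psiTilde3 a b u v = psiTilde3Cleared a b u (a * b * v) := by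
  unfold psiTilde3 psiTilde3Cleared
  ring

theorem psiTilde3Cleared_mul_psiTilde3Cleared {a b u V W : R}
    (hs : V + W = b * u ^ 2 - a * u - 1) (hp : V * W = -(a * b * u ^ 3)) :
    psiTilde3Cleared a b u V * psiTilde3Cleared a b u W
      = -(a ^ 6 * b ^ 7 * u ^ 4 * fPoly a b u) := by
  unfold psiTilde3Cleared fPoly
  rw [quartic_mul_quartic_eq_of_add_of_mul hs hp]
  ring

end

theorem stmt_13_general {R : Type*} [CommRing R] (a b u v w : R)
    [Invertible (a * b)]
    (h1 : v + w = (b * u ^ 2 - a * u - 1) * ⅟(a * b))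
    (h2 : v * w = -u ^ 3 * ⅟(a * b)) :
    (3 * u ^ 4 + (a ^ 2 + 4 * b) * u ^ 3 * v + 3 * a ^ 2 * b * u ^ 2 * v ^ 2
        + 3 * a ^ 2 * b ^ 2 * u * v ^ 3 + a ^ 2 * b ^ 3 * v ^ 4)
      * (3 * u ^ 4 + (a ^ 2 + 4 * b) * u ^ 3 * w + 3 * a ^ 2 * b * u ^ 2 * w ^ 2
        + 3 * a ^ 2 * b ^ 2 * u * w ^ 3 + a ^ 2 * b ^ 3 * w ^ 4)
      = -(u ^ 4
          * (b ^ 4 * u ^ 8 + 3 * a * b ^ 3 * u ^ 7 + 3 * a ^ 2 * b ^ 2 * u ^ 6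
            + (a ^ 3 * b + 7 * a * b ^ 2) * u ^ 5 + (6 * a ^ 2 * b - 6 * b ^ 2) * u ^ 4
            + 9 * a * b * u ^ 3 + (-a ^ 2 + 8 * b) * u ^ 2 - 3 * a * u - 3))
          * (b * ⅟(a * b) ^ 2) := by
  show psiTilde3 a b u v * psiTilde3 a b u w = -(u ^ 4 * fPoly a b u) * (b * ⅟(a * b) ^ 2)
  have hab := mul_invOf_self (a * b)
  have hs : a * b * v + a * b * w = b * u ^ 2 - a * u - 1 := by
    linear_combination a * b * h1 + (b * u ^ 2 - a * u - 1) * hab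
  have hp : a * b * v * (a * b * w) = -(a * b * u ^ 3) := by
    linear_combination (a * b) ^ 2 * h2 - a * b * u ^ 3 * hab
  have hcancel : (a * b) ^ 8 * (b * ⅟(a * b) ^ 2) = a ^ 6 * b ^ 7 := by
    linear_combination a ^ 6 * b ^ 7 * (a * b * ⅟(a * b) + 1) * hab
  apply (isUnit_of_invertible ((a * b) ^ 8)).mul_left_cancel
  calc (a * b) ^ 8 * (psiTilde3 a b u v * psiTilde3 a b u w)
      = (a * b) ^ 4 * psiTilde3 a b u v * ((a * b) ^ 4 * psiTilde3 a b u w) := by ring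
    _ = -(a ^ 6 * b ^ 7 * u ^ 4 * fPoly a b u) := by
      rw [pow_four_mul_psiTilde3, pow_four_mul_psiTilde3]
      exact psiTilde3Cleared_mul_psiTilde3Cleared hs hp
    _ = (a * b) ^ 8 * (-(u ^ 4 * fPoly a b u) * (b * ⅟(a * b) ^ 2)) := by
      rw [← hcancel]
      ring

/-- Over a commutative ring R with 2 and ab invertible, if
v + v̄ = (bu² − au − 1)/(ab) and v·v̄ = −u³/(ab), then
ψ̃₃(u,v)·ψ̃₃(u,v̄) = −u⁴·f(u)/(a²b). -/
theorem stmt_13 {R : Type*} [CommRing R] [Invertible (2 : R)] (a b u v w : R)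
    [Invertible (a * b)]
    (h1 : v + w = (b * u ^ 2 - a * u - 1) * ⅟(a * b))
    (h2 : v * w = -u ^ 3 * ⅟(a * b)) :
    (3 * u ^ 4 + (a ^ 2 + 4 * b) * u ^ 3 * v + 3 * a ^ 2 * b * u ^ 2 * v ^ 2
        + 3 * a ^ 2 * b ^ 2 * u * v ^ 3 + a ^ 2 * b ^ 3 * v ^ 4)
      * (3 * u ^ 4 + (a ^ 2 + 4 * b) * u ^ 3 * w + 3 * a ^ 2 * b * u ^ 2 * w ^ 2
        + 3 * a ^ 2 * b ^ 2 * u * w ^ 3 + a ^ 2 * b ^ 3 * w ^ 4)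
      = -(u ^ 4
          * (b ^ 4 * u ^ 8 + 3 * a * b ^ 3 * u ^ 7 + 3 * a ^ 2 * b ^ 2 * u ^ 6
            + (a ^ 3 * b + 7 * a * b ^ 2) * u ^ 5 + (6 * a ^ 2 * b - 6 * b ^ 2) * u ^ 4
            + 9 * a * b * u ^ 3 + (-a ^ 2 + 8 * b) * u ^ 2 - 3 * a * u - 3))
          * (b * ⅟(a * b) ^ 2) :=
  stmt_13_general a b u v w h1 h2
end

section
/- The polynomial f(u) = b⁴u⁸ + 3ab³u⁷ + 3a²b²u⁶ + (a³b + 7ab²)u⁵ + (6a²b − 6b²)u⁴ + 9abu³ + (−a² + 8b)u² − 3au − 3 is Eisenstein at the ideal (3, a² + b) of ℤ[a,b] after reversing: the constant term −3 lies in (3, a²+b) but not in (3, a²+b)², all non-leading coefficients (coefficients of u⁰ through u⁷) lie in (3, a²+b), and the leading coefficient b⁴ does not lie in (3, a²+b). -/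
/-!
Subtracting the leading term leaves `3 g + (a² + b) h` with explicit `g, h`, so the lower
coefficients lie in `P`. The constant-coefficient map `ℤ[a,b] → ℤ` sends `P` into `(3)`, hence
`P²` into `(9)`, which misses `-3`.
-/

open Polynomial

namespace MvPolynomial

theorem C_notMem_span_C_pair_sq {R σ : Type*} [CommRing R] [IsDomain R]
    {n : R} (hn : n ≠ 0) (hu : ¬IsUnit n) {q : MvPolynomial σ R} (hq : constantCoeff q = 0) :
    C n ∉ Ideal.span {C n, q} ^ 2 := by
  intro hmem
  have hmap : (Ideal.span {C n, q} ^ 2).map constantCoeff = Ideal.span {n ^ 2} := by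
    rw [Ideal.map_pow, Ideal.map_span, Set.image_pair, constantCoeff_C, hq,
      Ideal.span_pair_zero, Ideal.span_singleton_pow]
  obtain ⟨c, hc⟩ : n ^ 2 ∣ n := by
    simpa [hmap, Ideal.mem_span_singleton] using Ideal.mem_map_of_mem constantCoeff hmem
  refine hu (IsUnit.of_mul_eq_one c (mul_left_cancel₀ hn ?_))
  rw [mul_one, ← mul_assoc, ← sq, ← hc]

theorem X_pow_notMem_span_natCast_pair {σ : Type*} [DecidableEq σ] (p : ℕ) [Fact (1 < p)]
    {i j : σ} (hij : i ≠ j) (n : ℕ) :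
    X j ^ n ∉ Ideal.span {(p : MvPolynomial σ ℤ), X i ^ 2 + X j} := by
  -- reduce modulo `p` and substitute `X j ↦ -(X i) ^ 2`: the ideal dies, `X j ^ n` does not
  let φ : MvPolynomial σ ℤ →+* (ZMod p)[X] :=
    eval₂Hom (Int.castRingHom _) fun k => if k = i then Polynomial.X else -Polynomial.X ^ 2
  have hφi : φ (X i) = Polynomial.X := by simp [φ]
  have hφj : φ (X j) = -Polynomial.X ^ 2 := by simp [φ, hij.symm]
  have hker : Ideal.span {(p : MvPolynomial σ ℤ), X i ^ 2 + X j} ≤ RingHom.ker φ := by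
    rw [Ideal.span_le, Set.pair_subset_iff]
    constructor
    · simp [RingHom.mem_ker]
    · simp [RingHom.mem_ker, hφi, hφj]
  intro hmem
  have h := hker hmem
  rw [RingHom.mem_ker, map_pow, hφj, neg_pow, ← pow_mul] at h
  exact (isUnit_neg_one.pow n).ne_zero (mul_X_pow_eq_zero h)

end MvPolynomial

/-- f is Eisenstein at P = (3, a² + b) ⊂ ℤ[a,b]: all non-leading
coefficients lie in P, the leading coefficient b⁴ does not lie in P, and the
constant term −3 does not lie in P². -/
theorem stmt_14 :
    let a : MvPolynomial (Fin 2) ℤ := MvPolynomial.X 0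
    let b : MvPolynomial (Fin 2) ℤ := MvPolynomial.X 1
    let P : Ideal (MvPolynomial (Fin 2) ℤ) := Ideal.span {3, a ^ 2 + b}
    let f : Polynomial (MvPolynomial (Fin 2) ℤ) :=
      C (b ^ 4) * X ^ 8 + C (3 * a * b ^ 3) * X ^ 7 + C (3 * a ^ 2 * b ^ 2) * X ^ 6
        + C (a ^ 3 * b + 7 * a * b ^ 2) * X ^ 5 + C (6 * a ^ 2 * b - 6 * b ^ 2) * X ^ 4
        + C (9 * a * b) * X ^ 3 + C (-a ^ 2 + 8 * b) * X ^ 2 - C (3 * a) * X - 3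
    (∀ i < 8, f.coeff i ∈ P) ∧ b ^ 4 ∉ P ∧ f.coeff 0 ∉ P ^ 2 := by
  intro a b P f
  set g : Polynomial (MvPolynomial (Fin 2) ℤ) := C (a * b ^ 3) * X ^ 7 + C (a ^ 2 * b ^ 2) * X ^ 6
    + C (2 * a * b ^ 2) * X ^ 5 + C (2 * a ^ 2 * b - 2 * b ^ 2) * X ^ 4 + C (3 * a * b) * X ^ 3
    + C (3 * b) * X ^ 2 - C a * X - 1
  set h : Polynomial (MvPolynomial (Fin 2) ℤ) := C (a * b) * X ^ 5 - X ^ 2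
  have hf : f = C (b ^ 4) * X ^ 8 + (C 3 * g + C (a ^ 2 + b) * h) := by
    simp only [f, g, h, map_add, map_sub, map_mul, map_pow, map_neg, map_ofNat]
    ring
  refine ⟨fun i hi => ?_, MvPolynomial.X_pow_notMem_span_natCast_pair 3 (by decide) 4, ?_⟩
  · rw [hf, coeff_add, coeff_C_mul_X_pow, if_neg hi.ne, zero_add, coeff_add, coeff_C_mul,
      coeff_C_mul, Ideal.mem_span_pair]
    exact ⟨g.coeff i, h.coeff i, by ring⟩
  · have hf0 : f.coeff 0 = -3 := by simp [hf, g, h]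
    rw [hf0, neg_mem_iff, ← map_ofNat MvPolynomial.C 3]
    exact MvPolynomial.C_notMem_span_C_pair_sq (by norm_num) (by decide) (by simp [a, b])
end
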